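/- Let q be a prime power and let F be a finite field with q² elements, with field involution σ : x ↦ x^q. Consider the standard hermitian form h(v) = v₁·σ(v₁) + v₂·σ(v₂) on F². Then the special unitary group SU₂(F,σ) = {g ∈ SL₂(F) : σ(g)ᵀ · g = 1} acts transitively on the vectors of any fixed nonzero norm: for all v, w ∈ F² with h(v) = h(w) ≠ 0, there exists g ∈ SU₂(F,σ) such that g·v = w. -/

import Mathlib

open Matrix in
/-- The special unitary group `SU₂(F,σ) = {g ∈ SL₂(F) : σ(g)ᵀ · g = 1}`, where the
field involution `σ` is applied entrywise. -/
def SU₂ {F : Type} [Field F] (σ : F →+* F) :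
    Subgroup (SpecialLinearGroup (Fin 2) F) where
  carrier := {g | ((g : Matrix (Fin 2) (Fin 2) F).map σ)ᵀ * (g : Matrix (Fin 2) (Fin 2) F) = 1}
  one_mem' := by
    simp [Set.mem_setOf_eq, SpecialLinearGroup.coe_one, Matrix.map_one]
  mul_mem' := by
    intro a b ha hb
    simp only [Set.mem_setOf_eq] at ha hb ⊢
    change (((a : Matrix (Fin 2) (Fin 2) F) * (b : Matrix (Fin 2) (Fin 2) F)).map σ)ᵀ *
      ((a : Matrix (Fin 2) (Fin 2) F) * (b : Matrix (Fin 2) (Fin 2) F)) = 1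
    rw [Matrix.map_mul, Matrix.transpose_mul]
    calc ((b : Matrix (Fin 2) (Fin 2) F).map σ)ᵀ * ((a : Matrix (Fin 2) (Fin 2) F).map σ)ᵀ *
          ((a : Matrix (Fin 2) (Fin 2) F) * (b : Matrix (Fin 2) (Fin 2) F))
        = ((b : Matrix (Fin 2) (Fin 2) F).map σ)ᵀ *
            (((a : Matrix (Fin 2) (Fin 2) F).map σ)ᵀ * (a : Matrix (Fin 2) (Fin 2) F)) *
            (b : Matrix (Fin 2) (Fin 2) F) := by noncomm_ring
      _ = 1 := by rw [ha, mul_one, hb]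
  inv_mem' := by
    intro g hg
    simp only [Set.mem_setOf_eq] at hg ⊢
    have hBC : (g : Matrix (Fin 2) (Fin 2) F) * ((g⁻¹ : SpecialLinearGroup (Fin 2) F) :
        Matrix (Fin 2) (Fin 2) F) = 1 := by
      exact congrArg (fun x : SpecialLinearGroup (Fin 2) F => (x : Matrix (Fin 2) (Fin 2) F))
        (mul_inv_cancel g)
    have h3 : (((g⁻¹ : SpecialLinearGroup (Fin 2) F) : Matrix (Fin 2) (Fin 2) F).map σ)ᵀ *
        ((g : Matrix (Fin 2) (Fin 2) F).map σ)ᵀ = 1 := by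
      rw [← Matrix.transpose_mul, ← Matrix.map_mul, hBC,
        Matrix.map_one σ (map_zero σ) (map_one σ), Matrix.transpose_one]
    calc (((g⁻¹ : SpecialLinearGroup (Fin 2) F) : Matrix (Fin 2) (Fin 2) F).map σ)ᵀ *
          ((g⁻¹ : SpecialLinearGroup (Fin 2) F) : Matrix (Fin 2) (Fin 2) F)
        = (((g⁻¹ : SpecialLinearGroup (Fin 2) F) : Matrix (Fin 2) (Fin 2) F).map σ)ᵀ *
            (((g : Matrix (Fin 2) (Fin 2) F).map σ)ᵀ * (g : Matrix (Fin 2) (Fin 2) F)) *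
            ((g⁻¹ : SpecialLinearGroup (Fin 2) F) : Matrix (Fin 2) (Fin 2) F) := by
          rw [hg, mul_one]
      _ = ((((g⁻¹ : SpecialLinearGroup (Fin 2) F) : Matrix (Fin 2) (Fin 2) F).map σ)ᵀ *
            ((g : Matrix (Fin 2) (Fin 2) F).map σ)ᵀ) *
            ((g : Matrix (Fin 2) (Fin 2) F) *
              ((g⁻¹ : SpecialLinearGroup (Fin 2) F) : Matrix (Fin 2) (Fin 2) F)) := by
          noncomm_ring
      _ = 1 := by rw [h3, hBC, one_mul]

/-!
For `v = (a, b)` the matrix `M(v) = !![a, -σ b; b, σ a]` has first column `v`, determinant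
`h(v)` and satisfies `M(v)^* M(v) = M(v) M(v)^* = h(v) • 1`, where `M^* = σ(M)ᵀ`.
Hence if `h(v) = h(w) ≠ 0`, then `h(v)⁻¹ • M(w) M(v)^*` is unitary of determinant `1` and
sends `v` to `M(w) e₀ = w`.  Over `𝔽_{q²}` the Frobenius `x ↦ x^q` is an involution.
-/

open Matrix

section Unitary

variable {F : Type} [Field F] (σ : F →+* F)

def hermNorm (v : Fin 2 → F) : F := v 0 * σ (v 0) + v 1 * σ (v 1)

def unitaryFrame (v : Fin 2 → F) : Matrix (Fin 2) (Fin 2) F := !![v 0, -σ (v 1); v 1, σ (v 0)]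

def transporter (v w : Fin 2 → F) : Matrix (Fin 2) (Fin 2) F :=
  (hermNorm σ v)⁻¹ • unitaryFrame σ w * ((unitaryFrame σ v).map σ)ᵀ

variable {σ}

theorem transpose_map_transpose_map (hσ : Function.Involutive σ) {m n : Type*}
    (A : Matrix m n F) : ((A.map σ)ᵀ.map σ)ᵀ = A := by
  ext i j
  simp [hσ _]

theorem map_hermNorm (hσ : Function.Involutive σ) (v : Fin 2 → F) :
    σ (hermNorm σ v) = hermNorm σ v := by
  simp only [hermNorm, map_add, map_mul, hσ _]
  ring

theorem det_unitaryFrame (v : Fin 2 → F) : (unitaryFrame σ v).det = hermNorm σ v := by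
  simp only [unitaryFrame, hermNorm, det_fin_two_of]
  ring

theorem conjTranspose_unitaryFrame_mul (hσ : Function.Involutive σ) (v : Fin 2 → F) :
    ((unitaryFrame σ v).map σ)ᵀ * unitaryFrame σ v = hermNorm σ v • 1 := by
  ext i j
  fin_cases i <;> fin_cases j <;>
    simp [unitaryFrame, hermNorm, mul_apply, Fin.sum_univ_two, hσ _] <;> ring

theorem unitaryFrame_mul_conjTranspose (hσ : Function.Involutive σ) (v : Fin 2 → F) :
    unitaryFrame σ v * ((unitaryFrame σ v).map σ)ᵀ = hermNorm σ v • 1 := by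
  ext i j
  fin_cases i <;> fin_cases j <;>
    simp [unitaryFrame, hermNorm, mul_apply, Fin.sum_univ_two, hσ _] <;> ring

theorem conjTranspose_unitaryFrame_mulVec (hσ : Function.Involutive σ) (v : Fin 2 → F) :
    ((unitaryFrame σ v).map σ)ᵀ *ᵥ v = hermNorm σ v • Pi.single 0 1 := by
  ext i
  fin_cases i <;> simp [unitaryFrame, hermNorm, mulVec, dotProduct, Fin.sum_univ_two, hσ _] <;> ring

theorem unitaryFrame_mulVec_single (v : Fin 2 → F) : unitaryFrame σ v *ᵥ Pi.single 0 1 = v := by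
  ext i
  fin_cases i <;> simp [unitaryFrame]

theorem transporter_conjTranspose (hσ : Function.Involutive σ) {v w : Fin 2 → F}
    (hvw : hermNorm σ v = hermNorm σ w) :
    ((transporter σ v w).map σ)ᵀ = transporter σ w v := by
  rw [transporter, transporter, Matrix.map_mul, transpose_mul, map_smul' σ _ _ (map_mul σ),
    transpose_smul, map_inv₀, map_hermNorm hσ, transpose_map_transpose_map hσ, hvw, Matrix.mul_smul,
    smul_mul]

theorem transporter_mul (hσ : Function.Involutive σ) {w : Fin 2 → F} (hw : hermNorm σ w ≠ 0)
    (u v : Fin 2 → F) : transporter σ w u * transporter σ v w = transporter σ v u := by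
  calc transporter σ w u * transporter σ v w
      = ((hermNorm σ v)⁻¹ * (hermNorm σ w)⁻¹) • (unitaryFrame σ u *
          (((unitaryFrame σ w).map σ)ᵀ * unitaryFrame σ w) * ((unitaryFrame σ v).map σ)ᵀ) := by
        simp only [transporter, Matrix.smul_mul, Matrix.mul_smul, smul_smul, Matrix.mul_assoc]
    _ = ((hermNorm σ v)⁻¹ * (hermNorm σ w)⁻¹ * hermNorm σ w) • (unitaryFrame σ u *
          ((unitaryFrame σ v).map σ)ᵀ) := by
        rw [conjTranspose_unitaryFrame_mul hσ, Matrix.mul_smul, Matrix.mul_one, Matrix.smul_mul,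
          smul_smul]
    _ = transporter σ v u := by
        rw [mul_assoc, inv_mul_cancel₀ hw, mul_one, transporter, Matrix.smul_mul]

theorem transporter_self (hσ : Function.Involutive σ) {v : Fin 2 → F} (hv : hermNorm σ v ≠ 0) :
    transporter σ v v = 1 := by
  rw [transporter, smul_mul, unitaryFrame_mul_conjTranspose hσ, smul_smul, inv_mul_cancel₀ hv,
    one_smul]

theorem det_transporter (hσ : Function.Involutive σ) {v w : Fin 2 → F} (hv : hermNorm σ v ≠ 0)
    (hvw : hermNorm σ v = hermNorm σ w) : (transporter σ v w).det = 1 := by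
  rw [transporter, det_mul, det_smul, det_transpose, ← RingHom.mapMatrix_apply, ← RingHom.map_det,
    det_unitaryFrame, det_unitaryFrame, map_hermNorm hσ, ← hvw, Fintype.card_fin]
  field_simp

theorem transporter_mulVec (hσ : Function.Involutive σ) {v : Fin 2 → F} (hv : hermNorm σ v ≠ 0)
    (w : Fin 2 → F) : transporter σ v w *ᵥ v = w := by
  rw [transporter, ← mulVec_mulVec, conjTranspose_unitaryFrame_mulVec hσ, mulVec_smul,
    smul_mulVec, smul_smul, mul_inv_cancel₀ hv, one_smul, unitaryFrame_mulVec_single]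

end Unitary

theorem involutive_of_card_eq_sq {F : Type} [Field F] [Fintype F] {σ : F →+* F} {q : ℕ}
    (hF : Fintype.card F = q ^ 2) (hσ : ∀ x, σ x = x ^ q) : Function.Involutive σ := by
  intro x
  rw [hσ, hσ, ← pow_mul, ← sq, ← hF, FiniteField.pow_card]

open Matrix in
theorem stmt_7_general (q : ℕ) (F : Type) [Field F] [Fintype F]
    (hF : Fintype.card F = q ^ 2) (σ : F →+* F) (hσ : ∀ x, σ x = x ^ q)
    (v w : Fin 2 → F)
    (hvw : v 0 * σ (v 0) + v 1 * σ (v 1) = w 0 * σ (w 0) + w 1 * σ (w 1))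
    (hv : v 0 * σ (v 0) + v 1 * σ (v 1) ≠ 0) :
    ∃ g ∈ SU₂ σ, (g : Matrix (Fin 2) (Fin 2) F).mulVec v = w := by
  have hinv := involutive_of_card_eq_sq hF hσ
  refine ⟨⟨transporter σ v w, det_transporter hinv hv hvw⟩, ?_, transporter_mulVec hinv hv w⟩
  change ((transporter σ v w).map σ)ᵀ * transporter σ v w = 1
  rw [transporter_conjTranspose hinv hvw, transporter_mul hinv (fun hw => hv (hvw.trans hw)),
    transporter_self hinv hv]

open Matrix in
/-- `SU₂(F,σ)` acts transitively on the vectors of any fixed nonzero hermitian norm, where the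
standard hermitian norm is `h(v) = v₁·σ(v₁) + v₂·σ(v₂)`. -/
theorem stmt_7 (q : ℕ) (hq : IsPrimePow q) (F : Type) [Field F] [Fintype F]
    (hF : Fintype.card F = q ^ 2) (σ : F →+* F) (hσ : ∀ x, σ x = x ^ q)
    (v w : Fin 2 → F)
    (hvw : v 0 * σ (v 0) + v 1 * σ (v 1) = w 0 * σ (w 0) + w 1 * σ (w 1))
    (hv : v 0 * σ (v 0) + v 1 * σ (v 1) ≠ 0) :
    ∃ g ∈ SU₂ σ, (g : Matrix (Fin 2) (Fin 2) F).mulVec v = w :=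
  stmt_7_general q F hF σ hσ v w hvw hv
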